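/- Let (N, L, K, R, P) be twice differentiable real functions on an open interval I ⊂ (0,∞) with N, L, K positive, satisfying the full static cylindrically symmetric Einstein–Yang–Mills ODE system, and define the hamiltonian H(r) = (1/2)·N L K·(N'L'/(NL) + N'K'/(NK) + L'K'/(LK) − P'²/L² − R'²/K² + P²R²/(L²K²)). Then the product N(r)·L(r)·K(r)·H(r) is constant on I; in particular, if the hamiltonian constraint H = 0 holds at a single point of I, then H vanishes identically on I. -/

import Mathlib

open Set

/-- The full static cylindrically symmetric Einstein–Yang–Mills ODE system in
the Kasner gauge, for five radial functions `N, L, K` (metric) and `R, P`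
(Yang–Mills), stated on a set `I`. -/
def EYMSystem (N L K R P : ℝ → ℝ) (I : Set ℝ) : Prop :=
  ∀ r ∈ I,
    deriv (fun s => deriv N s * L s * K s) r =
      N r * L r * K r *
        ((deriv P r) ^ 2 / (L r) ^ 2 + (deriv R r) ^ 2 / (K r) ^ 2 +
          (P r) ^ 2 * (R r) ^ 2 / ((L r) ^ 2 * (K r) ^ 2)) ∧
    deriv (fun s => N s * deriv L s * K s) r =
      N r * L r * K r *
        (-(deriv P r) ^ 2 / (L r) ^ 2 + (deriv R r) ^ 2 / (K r) ^ 2 -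
          (P r) ^ 2 * (R r) ^ 2 / ((L r) ^ 2 * (K r) ^ 2)) ∧
    deriv (fun s => N s * L s * deriv K s) r =
      N r * L r * K r *
        ((deriv P r) ^ 2 / (L r) ^ 2 - (deriv R r) ^ 2 / (K r) ^ 2 -
          (P r) ^ 2 * (R r) ^ 2 / ((L r) ^ 2 * (K r) ^ 2)) ∧
    deriv (fun s => N s * L s / K s * deriv R s) r =
      N r / (L r * K r) * (R r * (P r) ^ 2) ∧
    deriv (fun s => N s * K s / L s * deriv P s) r =
      N r / (L r * K r) * (P r * (R r) ^ 2)

/-- The hamiltonian of the one-dimensional reduced EYM system. -/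
noncomputable def EYMHamiltonian (N L K R P : ℝ → ℝ) : ℝ → ℝ := fun r =>
  (1 / 2) * (N r * L r * K r) *
    (deriv N r * deriv L r / (N r * L r) + deriv N r * deriv K r / (N r * K r) +
      deriv L r * deriv K r / (L r * K r) - (deriv P r) ^ 2 / (L r) ^ 2 -
      (deriv R r) ^ 2 / (K r) ^ 2 + (P r) ^ 2 * (R r) ^ 2 / ((L r) ^ 2 * (K r) ^ 2))

/-!
Through the fluxes `N K P'` and `N L R'` the product `N L K H` becomes the polynomial
`Q = ½ (N L K (N'L'K + N'L K' + N L'K') - (N K P')² - (N L R')² + (N P R)²)` in the fields and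
their first derivatives. In `Q'` the second derivatives of `N, L, K` occur only through
`(N'L K)'`, `(N L'K)'`, `(N L K')'` and those of `R, P` only through the Yang–Mills fluxes, so
substituting the field equations makes `Q'` vanish identically. Hence `Q` is constant on the
interval `I`, and since `N L K > 0` a zero of `H` at one point forces `H = 0` everywhere.
-/

theorem ContDiffOn.hasDerivAt_and_hasDerivAt_deriv {𝕜 F : Type*} [NontriviallyNormedField 𝕜]
    [NormedAddCommGroup F] [NormedSpace 𝕜 F] {f : 𝕜 → F} {I : Set 𝕜} (hI : IsOpen I)
    (hf : ContDiffOn 𝕜 2 f I) {r : 𝕜} (hr : r ∈ I) :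
    HasDerivAt f (deriv f r) r ∧ HasDerivAt (deriv f) (deriv (deriv f) r) r :=
  ⟨((hf.differentiableOn (by norm_num)).differentiableAt (hI.mem_nhds hr)).hasDerivAt,
    (((hf.deriv_of_isOpen hI (by norm_num : (1 : WithTop ℕ∞) + 1 ≤ 2)).differentiableOn
      one_ne_zero).differentiableAt (hI.mem_nhds hr)).hasDerivAt⟩

noncomputable def eymConservedQuantity (N L K R P : ℝ → ℝ) : ℝ → ℝ := fun s =>
  (1 / 2) *
    (N s * L s * K s *
        (deriv N s * deriv L s * K s + deriv N s * L s * deriv K s +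
          N s * deriv L s * deriv K s) -
      (N s * K s * deriv P s) ^ 2 - (N s * L s * deriv R s) ^ 2 + (N s * P s * R s) ^ 2)

section

variable {N L K R P : ℝ → ℝ} {I : Set ℝ} {r : ℝ}

theorem eymConservedQuantity_eq_mul_hamiltonian (hN : N r ≠ 0) (hL : L r ≠ 0) (hK : K r ≠ 0) :
    eymConservedQuantity N L K R P r = N r * L r * K r * EYMHamiltonian N L K R P r := by
  simp only [eymConservedQuantity, EYMHamiltonian]
  field_simp

theorem hasDerivAt_eymConservedQuantity (hI : IsOpen I) (hNd : ContDiffOn ℝ 2 N I)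
    (hLd : ContDiffOn ℝ 2 L I) (hKd : ContDiffOn ℝ 2 K I) (hRd : ContDiffOn ℝ 2 R I)
    (hPd : ContDiffOn ℝ 2 P I) (h : EYMSystem N L K R P I) (hr : r ∈ I)
    (hL : L r ≠ 0) (hK : K r ≠ 0) :
    HasDerivAt (eymConservedQuantity N L K R P) 0 r := by
  obtain ⟨hN₁, hN₂⟩ := hNd.hasDerivAt_and_hasDerivAt_deriv hI hr
  obtain ⟨hL₁, hL₂⟩ := hLd.hasDerivAt_and_hasDerivAt_deriv hI hr
  obtain ⟨hK₁, hK₂⟩ := hKd.hasDerivAt_and_hasDerivAt_deriv hI hr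
  obtain ⟨hR₁, hR₂⟩ := hRd.hasDerivAt_and_hasDerivAt_deriv hI hr
  obtain ⟨hP₁, hP₂⟩ := hPd.hasDerivAt_and_hasDerivAt_deriv hI hr
  obtain ⟨e₁, e₂, e₃, e₄, e₅⟩ := h r hr
  have E₁ := ((hN₂.mul hL₁).mul hK₁).deriv.symm.trans e₁
  have E₂ := ((hN₁.mul hL₂).mul hK₁).deriv.symm.trans e₂
  have E₃ := ((hN₁.mul hL₁).mul hK₂).deriv.symm.trans e₃
  have E₄ := (((hN₁.mul hL₁).div hK₁ hK).mul hR₂).deriv.symm.trans e₄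
  have E₅ := (((hN₁.mul hK₁).div hL₁ hL).mul hP₂).deriv.symm.trans e₅
  simp only [Pi.mul_apply, Pi.div_apply] at E₁ E₂ E₃ E₄ E₅
  field_simp at E₁ E₂ E₃ E₄ E₅
  have hF := ((((hN₁.mul hL₁).mul hK₁).mul
      ((((hN₂.mul hL₂).mul hK₁).add ((hN₂.mul hL₁).mul hK₂)).add ((hN₁.mul hL₂).mul hK₂))).sub
      (((hN₁.mul hK₁).mul hP₂).pow 2) |>.sub (((hN₁.mul hL₁).mul hR₂).pow 2) |>.add
      (((hN₁.mul hP₁).mul hR₁).pow 2)).const_mul (1 / 2 : ℝ)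
  refine hF.congr_deriv ?_
  simp only [Pi.mul_apply, Pi.add_apply]
  apply mul_left_cancel₀ (by positivity : L r ^ 4 * K r ^ 4 ≠ 0)
  linear_combination
    (1 / 2 * (N r * deriv L r * K r + N r * L r * deriv K r) * L r ^ 3 * K r ^ 3) * E₁ +
    (1 / 2 * (deriv N r * L r * K r + N r * L r * deriv K r) * L r ^ 3 * K r ^ 3) * E₂ +
    (1 / 2 * (deriv N r * L r * K r + N r * deriv L r * K r) * L r ^ 3 * K r ^ 3) * E₃ -
    (N r * L r ^ 4 * deriv R r * K r ^ 3) * E₄ -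
    (N r * K r ^ 4 * deriv P r * L r ^ 3) * E₅

end

theorem stmt_8_general (N L K R P : ℝ → ℝ) (I : Set ℝ)
    (hIopen : IsOpen I) (hIconn : IsPreconnected I)
    (hN : ∀ r ∈ I, 0 < N r) (hL : ∀ r ∈ I, 0 < L r) (hK : ∀ r ∈ I, 0 < K r)
    (hNd : ContDiffOn ℝ 2 N I) (hLd : ContDiffOn ℝ 2 L I)
    (hKd : ContDiffOn ℝ 2 K I) (hRd : ContDiffOn ℝ 2 R I)
    (hPd : ContDiffOn ℝ 2 P I)
    (h : EYMSystem N L K R P I) :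
    (∀ r ∈ I, ∀ s ∈ I,
        N r * L r * K r * EYMHamiltonian N L K R P r =
          N s * L s * K s * EYMHamiltonian N L K R P s) ∧
    ((∃ r₀ ∈ I, EYMHamiltonian N L K R P r₀ = 0) →
        ∀ r ∈ I, EYMHamiltonian N L K R P r = 0) := by
  have hQ : ∀ r ∈ I, HasDerivAt (eymConservedQuantity N L K R P) 0 r := fun r hr =>
    hasDerivAt_eymConservedQuantity hIopen hNd hLd hKd hRd hPd h hr (hL r hr).ne' (hK r hr).ne'
  have hconst : ∀ r ∈ I, ∀ s ∈ I,
      N r * L r * K r * EYMHamiltonian N L K R P r =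
        N s * L s * K s * EYMHamiltonian N L K R P s := by
    intro r hr s hs
    rw [← eymConservedQuantity_eq_mul_hamiltonian (hN r hr).ne' (hL r hr).ne' (hK r hr).ne',
      ← eymConservedQuantity_eq_mul_hamiltonian (hN s hs).ne' (hL s hs).ne' (hK s hs).ne']
    exact hIopen.is_const_of_deriv_eq_zero hIconn
      (fun x hx => (hQ x hx).differentiableAt.differentiableWithinAt)
      (fun x hx => (hQ x hx).deriv) hr hs
  refine ⟨hconst, ?_⟩
  rintro ⟨r₀, hr₀, hH₀⟩ r hr
  have hNLK : N r * L r * K r ≠ 0 := (mul_pos (mul_pos (hN r hr) (hL r hr)) (hK r hr)).ne'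
  simpa [hH₀, hNLK] using hconst r hr r₀ hr₀

/-- Along every solution of the EYM system the product
`N L K H` of the hamiltonian with `N L K` is constant on the interval `I`;
in particular, if the hamiltonian constraint `H = 0` holds at one point of
`I`, then `H` vanishes identically on `I`. -/
theorem stmt_8 (N L K R P : ℝ → ℝ) (I : Set ℝ)
    (hIopen : IsOpen I) (hIconn : IsPreconnected I) (hIsub : I ⊆ Ioi 0)
    (hN : ∀ r ∈ I, 0 < N r) (hL : ∀ r ∈ I, 0 < L r) (hK : ∀ r ∈ I, 0 < K r)
    (hNd : ContDiffOn ℝ 2 N I) (hLd : ContDiffOn ℝ 2 L I)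
    (hKd : ContDiffOn ℝ 2 K I) (hRd : ContDiffOn ℝ 2 R I)
    (hPd : ContDiffOn ℝ 2 P I)
    (h : EYMSystem N L K R P I) :
    (∀ r ∈ I, ∀ s ∈ I,
        N r * L r * K r * EYMHamiltonian N L K R P r =
          N s * L s * K s * EYMHamiltonian N L K R P s) ∧
    ((∃ r₀ ∈ I, EYMHamiltonian N L K R P r₀ = 0) →
        ∀ r ∈ I, EYMHamiltonian N L K R P r = 0) :=
  stmt_8_general N L K R P I hIopen hIconn hN hL hK hNd hLd hKd hRd hPd h
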